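/- arXiv:1706.05940 — 7 statements merged into one kernel-verified Lean document; each statement's English description precedes it below -/
import Mathlib

section
/- Let Σ be a positive definite real p×p matrix with Σ ∈ 𝒮_𝒢, and let τ̂ ∈ ℝ^P. Consider the loss L(t) = (τ̂ − t)ᵀ Σ⁻¹ (τ̂ − t) on the set of vectors t ∈ ℝ^P that are constant on each block ℬ_ℓ. Then L is uniquely minimized on this set at the vector τ̃ = Γ τ̂, whose entries are the blockwise averages of τ̂: for every block ℬ_ℓ and every r ∈ ℬ_ℓ, τ̃_r = (1/|ℬ_ℓ|) Σ_{s ∈ ℬ_ℓ} τ̂_s. -/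
/-!
A permutation of the indices that preserves cluster labels acts on pairs, preserving blocks and
overlap types; any two pairs of one block are related by such a permutation. Hence every
`Σ ∈ 𝒮_𝒢` maps the space `V` of blockwise-constant vectors into itself, and so does `Σ⁻¹`.
Since `Γ` is the Euclidean orthogonal projection onto `V`, the residual `τ̂ - Γ τ̂` is orthogonal
to `Σ⁻¹ V = V`, which gives the Pythagoras identity
`L t = L (Γ τ̂) + (Γ τ̂ - t)ᵀ Σ⁻¹ (Γ τ̂ - t)` for `t ∈ V`; positive definiteness of `Σ⁻¹` concludes.
-/

open Matrix Finset

abbrev PairIdx (d : ℕ) := {p : Fin d × Fin d // p.1 < p.2}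

/-- Pairs `r` and `s` lie in the same block: the unordered pairs of cluster labels coincide. -/
def sameBlock {d K : ℕ} (g : Fin d → Fin K) (r s : PairIdx d) : Prop :=
  (g r.1.1 = g s.1.1 ∧ g r.1.2 = g s.1.2) ∨ (g r.1.1 = g s.1.2 ∧ g r.1.2 = g s.1.1)

instance {d K : ℕ} (g : Fin d → Fin K) : DecidableRel (sameBlock g) :=
  fun r s => by unfold sameBlock; infer_instance

/-- The overlap type `φ̄(r,s)`: the multiset of cluster labels of the elements of
`{i_r, j_r} ∩ {i_s, j_s}`.  The empty multiset encodes the type `(0,0)`, the singleton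
`{k}` encodes `(0,k)`, and the two-element multiset `{k₁,k₂}` encodes
`(min(k₁,k₂), max(k₁,k₂))`. -/
def overlap {d K : ℕ} (g : Fin d → Fin K) (r s : PairIdx d) : Multiset (Fin K) :=
  (({r.1.1, r.1.2} ∩ {s.1.1, s.1.2} : Finset (Fin d)).val.map g)

/-- The cardinality of the block containing `r`. -/
def blockCard {d K : ℕ} (g : Fin d → Fin K) (r : PairIdx d) : ℕ :=
  (Finset.univ.filter (fun t => sameBlock g r t)).card

/-- The blockwise-averaging matrix `Γ`. -/
noncomputable def Gamma {d K : ℕ} (g : Fin d → Fin K) :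
    Matrix (PairIdx d) (PairIdx d) ℝ :=
  Matrix.of fun r s => if sameBlock g r s then (1 : ℝ) / (blockCard g r) else 0

/-- Membership in the class `𝒮_𝒢`. -/
def inSG {d K : ℕ} (g : Fin d → Fin K) (S : Matrix (PairIdx d) (PairIdx d) ℝ) : Prop :=
  S.IsSymm ∧ ∀ r r' s s' : PairIdx d, sameBlock g r r' → sameBlock g s s' →
    overlap g r s = overlap g r' s' → S r s = S r' s'

section LinearAlgebra

variable {ι : Type*} [Fintype ι]

theorem Matrix.inv_mulVec_mem_of_mulVec_mem {𝕜 : Type*} [Field 𝕜] [DecidableEq ι]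
    {S : Matrix ι ι 𝕜} (hS : IsUnit S) {V : Submodule 𝕜 (ι → 𝕜)}
    (hV : ∀ v ∈ V, S *ᵥ v ∈ V) {w : ι → 𝕜} (hw : w ∈ V) : S⁻¹ *ᵥ w ∈ V := by
  let f : V →ₗ[𝕜] V := S.mulVecLin.restrict hV
  have hf : Function.Injective f := fun x y hxy => Subtype.ext <|
    (mulVec_injective_iff_isUnit.2 hS) (congrArg Subtype.val hxy)
  obtain ⟨u, hu⟩ := LinearMap.injective_iff_surjective.1 hf ⟨w, hw⟩
  have hSu : S *ᵥ u = w := congrArg Subtype.val hu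
  rw [← hSu, mulVec_mulVec, nonsing_inv_mul S (S.isUnit_iff_isUnit_det.1 hS), one_mulVec]
  exact u.2

theorem dotProduct_sub_mulVec_eq_zero {R : Type*} [CommRing R] {P : Matrix ι ι R} (hP : Pᵀ = P)
    {z : ι → R} (hz : P *ᵥ z = z) (x : ι → R) : (x - P *ᵥ x) ⬝ᵥ z = 0 := by
  rw [sub_dotProduct, dotProduct_comm (P *ᵥ x), dotProduct_mulVec, ← mulVec_transpose, hP, hz,
    dotProduct_comm, sub_self]

theorem Matrix.IsHermitian.quadForm_sub_eq_add {A : Matrix ι ι ℝ} (hA : A.IsHermitian)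
    {x y t : ι → ℝ} (horth : (x - y) ⬝ᵥ A *ᵥ (y - t) = 0) :
    (x - t) ⬝ᵥ A *ᵥ (x - t) = (x - y) ⬝ᵥ A *ᵥ (x - y) + (y - t) ⬝ᵥ A *ᵥ (y - t) := by
  have horth' : (y - t) ⬝ᵥ A *ᵥ (x - y) = 0 := by
    rw [dotProduct_mulVec, ← mulVec_transpose, ← conjTranspose_eq_transpose_of_trivial, hA.eq,
      dotProduct_comm, horth]
  rw [show x - t = (x - y) + (y - t) by abel, mulVec_add, add_dotProduct, dotProduct_add,
    dotProduct_add, horth, horth', add_zero, zero_add]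

end LinearAlgebra

theorem comp_swap_of_eq {α β : Type*} [DecidableEq α] {f : α → β} {a b : α} (h : f a = f b) :
    f ∘ Equiv.swap a b = f := by
  rw [Equiv.comp_swap_eq_update, h, Function.update_eq_self, ← h, Function.update_eq_self]

theorem exists_perm_comp_eq_of_apply_eq {α β : Type*} [DecidableEq α] (f : α → β)
    {a b c e : α} (hab : a ≠ b) (hce : c ≠ e) (hac : f a = f c) (hbe : f b = f e) :
    ∃ σ : Equiv.Perm α, f ∘ σ = f ∧ σ a = c ∧ σ b = e := by
  set b' := Equiv.swap a c b
  have hb'c : c ≠ b' := by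
    rw [← Equiv.swap_apply_left a c]
    exact (Equiv.swap a c).injective.ne hab
  have hb'e : f b' = f e := by rw [← hbe, ← Function.comp_apply (f := f), comp_swap_of_eq hac]
  refine ⟨Equiv.swap b' e * Equiv.swap a c, ?_, ?_, ?_⟩
  · rw [Equiv.Perm.coe_mul, ← Function.comp_assoc, comp_swap_of_eq hb'e, comp_swap_of_eq hac]
  · rw [Equiv.Perm.mul_apply, Equiv.swap_apply_left, Equiv.swap_apply_of_ne_of_ne hb'c hce]
  · rw [Equiv.Perm.mul_apply, Equiv.swap_apply_left]

section Blocks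

variable {d K : ℕ} (g : Fin d → Fin K)

theorem sameBlock_iff_sym2_eq {r s : PairIdx d} :
    sameBlock g r s ↔ s(g r.1.1, g r.1.2) = s(g s.1.1, g s.1.2) :=
  Sym2.eq_iff.symm

theorem sameBlock_equivalence : Equivalence (sameBlock g) := by
  constructor <;> intros <;> simp_all only [sameBlock_iff_sym2_eq]

theorem filter_sameBlock_eq {r r' : PairIdx d} (h : sameBlock g r r') :
    univ.filter (fun t => sameBlock g r t) = univ.filter (fun t => sameBlock g r' t) := by
  ext t
  simp only [mem_filter, mem_univ, true_and]
  exact ⟨(sameBlock_equivalence g).trans ((sameBlock_equivalence g).symm h),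
    (sameBlock_equivalence g).trans h⟩

theorem blockCard_eq {r r' : PairIdx d} (h : sameBlock g r r') :
    blockCard g r = blockCard g r' := by
  rw [blockCard, filter_sameBlock_eq g h, blockCard]

theorem blockCard_pos (r : PairIdx d) : 0 < blockCard g r :=
  card_pos.2 ⟨r, mem_filter.2 ⟨mem_univ r, (sameBlock_equivalence g).refl r⟩⟩

def blockConst : Submodule ℝ (PairIdx d → ℝ) where
  carrier := {v | ∀ r s, sameBlock g r s → v r = v s}
  add_mem' hv hw r s h := by simp only [Pi.add_apply, hv r s h, hw r s h]
  zero_mem' _ _ _ := rfl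
  smul_mem' c v hv r s h := by simp only [Pi.smul_apply, hv r s h]

theorem Gamma_mulVec_apply (τ : PairIdx d → ℝ) (r : PairIdx d) :
    (Gamma g *ᵥ τ) r =
      (∑ s ∈ univ.filter (fun t => sameBlock g r t), τ s) / (blockCard g r : ℝ) := by
  simp only [mulVec, dotProduct, Gamma, of_apply, sum_filter, sum_div]
  exact sum_congr rfl fun s _ => by split_ifs <;> ring

theorem Gamma_mulVec_mem (τ : PairIdx d → ℝ) : Gamma g *ᵥ τ ∈ blockConst g := by
  intro r s h
  rw [Gamma_mulVec_apply, Gamma_mulVec_apply, filter_sameBlock_eq g h, blockCard_eq g h]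

theorem Gamma_mulVec_of_mem {z : PairIdx d → ℝ} (hz : z ∈ blockConst g) :
    Gamma g *ᵥ z = z := by
  funext r
  have hsum : ∑ s ∈ univ.filter (fun t => sameBlock g r t), z s = blockCard g r * z r := by
    rw [sum_congr rfl fun s hs => hz s r ((sameBlock_equivalence g).symm (mem_filter.1 hs).2),
      sum_const, nsmul_eq_mul, blockCard]
  have hcard : (blockCard g r : ℝ) ≠ 0 := Nat.cast_ne_zero.2 (blockCard_pos g r).ne'
  rw [Gamma_mulVec_apply, hsum, mul_div_cancel_left₀ _ hcard]

theorem Gamma_transpose : (Gamma g)ᵀ = Gamma g := by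
  ext r s
  simp only [transpose_apply, Gamma, of_apply]
  by_cases h : sameBlock g r s
  · rw [if_pos h, if_pos ((sameBlock_equivalence g).symm h), blockCard_eq g h]
  · rw [if_neg h, if_neg fun h' => h ((sameBlock_equivalence g).symm h')]

end Blocks

section Pairs

variable {d K : ℕ}

def PairIdx.toFinset (r : PairIdx d) : Finset (Fin d) := {r.1.1, r.1.2}

theorem PairIdx.toFinset_injective : Function.Injective (PairIdx.toFinset (d := d)) := by
  intro r s h
  have mem : ∀ x, x = r.1.1 ∨ x = r.1.2 ↔ x = s.1.1 ∨ x = s.1.2 := fun x => by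
    simpa [PairIdx.toFinset] using congrArg (x ∈ ·) h
  have hr := r.2
  have hs := s.2
  rcases (mem r.1.1).1 (Or.inl rfl) with h1 | h1 <;> rcases (mem r.1.2).1 (Or.inr rfl) with h2 | h2
  all_goals first
    | exact Subtype.ext (Prod.ext h1 h2)
    | (exfalso; rw [h1, h2] at hr; exact (lt_irrefl _ hr))
    | (exfalso; rw [h1, h2] at hr; exact (lt_asymm hr hs))

def pairMap (σ : Equiv.Perm (Fin d)) (r : PairIdx d) : PairIdx d :=
  ⟨(min (σ r.1.1) (σ r.1.2), max (σ r.1.1) (σ r.1.2)), min_lt_max.2 (σ.injective.ne r.2.ne)⟩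

theorem toFinset_pairMap (σ : Equiv.Perm (Fin d)) (r : PairIdx d) :
    (pairMap σ r).toFinset = r.toFinset.map σ.toEmbedding := by
  rcases le_total (σ r.1.1) (σ r.1.2) with h | h <;>
    simp [PairIdx.toFinset, pairMap, h, Finset.pair_comm]

theorem pairMap_bijective (σ : Equiv.Perm (Fin d)) : Function.Bijective (pairMap σ) :=
  Finite.injective_iff_bijective.1 fun r s h => PairIdx.toFinset_injective <|
    map_injective σ.toEmbedding <| by rw [← toFinset_pairMap, ← toFinset_pairMap, h]

variable (g : Fin d → Fin K) {σ : Equiv.Perm (Fin d)}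

theorem sameBlock_pairMap (hσ : g ∘ σ = g) (r : PairIdx d) : sameBlock g r (pairMap σ r) := by
  have hσ' : ∀ x, g (σ x) = g x := congrFun hσ
  rw [sameBlock_iff_sym2_eq]
  rcases le_total (σ r.1.1) (σ r.1.2) with h | h <;>
    simp [pairMap, h, hσ', Sym2.eq_swap]

theorem overlap_pairMap (hσ : g ∘ σ = g) (r s : PairIdx d) :
    overlap g (pairMap σ r) (pairMap σ s) = overlap g r s := by
  change ((pairMap σ r).toFinset ∩ (pairMap σ s).toFinset).val.map g =
    (r.toFinset ∩ s.toFinset).val.map g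
  rw [toFinset_pairMap, toFinset_pairMap, ← map_inter, map_val, Multiset.map_map]
  exact congrArg (Multiset.map · _) hσ

theorem exists_pairMap_eq {r r' : PairIdx d} (h : sameBlock g r r') :
    ∃ σ : Equiv.Perm (Fin d), g ∘ σ = g ∧ pairMap σ r = r' := by
  have hr := r.2.ne
  have hr' := r'.2.ne
  rcases h with ⟨h1, h2⟩ | ⟨h1, h2⟩
  · obtain ⟨σ, hσ, ha, hb⟩ := exists_perm_comp_eq_of_apply_eq g hr hr' h1 h2
    refine ⟨σ, hσ, PairIdx.toFinset_injective ?_⟩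
    rw [toFinset_pairMap]
    simp [PairIdx.toFinset, ha, hb]
  · obtain ⟨σ, hσ, ha, hb⟩ := exists_perm_comp_eq_of_apply_eq g hr hr'.symm h1 h2
    refine ⟨σ, hσ, PairIdx.toFinset_injective ?_⟩
    rw [toFinset_pairMap]
    simp [PairIdx.toFinset, ha, hb, Finset.pair_comm]

end Pairs

section Invariance

variable {d K : ℕ} {g : Fin d → Fin K} {S : Matrix (PairIdx d) (PairIdx d) ℝ}

theorem inSG.apply_pairMap (hS : inSG g S) {σ : Equiv.Perm (Fin d)} (hσ : g ∘ σ = g)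
    (r s : PairIdx d) : S (pairMap σ r) (pairMap σ s) = S r s :=
  (hS.2 r _ s _ (sameBlock_pairMap g hσ r) (sameBlock_pairMap g hσ s)
    (overlap_pairMap g hσ r s).symm).symm

theorem inSG.mulVec_mem_blockConst (hS : inSG g S) {v : PairIdx d → ℝ}
    (hv : v ∈ blockConst g) : S *ᵥ v ∈ blockConst g := by
  intro r r' h
  obtain ⟨σ, hσ, rfl⟩ := exists_pairMap_eq g h
  refine Fintype.sum_bijective _ (pairMap_bijective σ) _ _ fun s => ?_
  change S r s * v s = S (pairMap σ r) (pairMap σ s) * v (pairMap σ s)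
  rw [hS.apply_pairMap hσ, hv s _ (sameBlock_pairMap g hσ s)]

end Invariance

theorem statement_1_general {d K : ℕ}
    (g : Fin d → Fin K)
    (Sig : Matrix (PairIdx d) (PairIdx d) ℝ) (hpd : Sig.PosDef) (hSG : inSG g Sig)
    (τhat : PairIdx d → ℝ)
    (L : (PairIdx d → ℝ) → ℝ)
    (hL : L = fun t => (τhat - t) ⬝ᵥ (Sig⁻¹).mulVec (τhat - t))
    (τtilde : PairIdx d → ℝ) (hτ : τtilde = (Gamma g).mulVec τhat) :
    (∀ r s : PairIdx d, sameBlock g r s → τtilde r = τtilde s) ∧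
    (∀ t : PairIdx d → ℝ, (∀ r s : PairIdx d, sameBlock g r s → t r = t s) →
      L τtilde ≤ L t) ∧
    (∀ t : PairIdx d → ℝ, (∀ r s : PairIdx d, sameBlock g r s → t r = t s) →
      L t = L τtilde → t = τtilde) ∧
    (∀ r : PairIdx d,
      τtilde r = (∑ s ∈ Finset.univ.filter (fun t => sameBlock g r t), τhat s)
        / (blockCard g r : ℝ)) := by
  subst hL hτ
  have hτmem := Gamma_mulVec_mem g τhat
  have hinv : Sig⁻¹.PosDef := hpd.inv
  have hresid : ∀ t ∈ blockConst g,
      (τhat - Gamma g *ᵥ τhat) ⬝ᵥ Sig⁻¹ *ᵥ (Gamma g *ᵥ τhat - t) = 0 := fun t ht =>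
    dotProduct_sub_mulVec_eq_zero (Gamma_transpose g) (Gamma_mulVec_of_mem g <|
      inv_mulVec_mem_of_mulVec_mem hpd.isUnit (fun _ => hSG.mulVec_mem_blockConst)
        (sub_mem hτmem ht)) τhat
  have pythagoras t (ht : t ∈ blockConst g) := hinv.isHermitian.quadForm_sub_eq_add (hresid t ht)
  refine ⟨hτmem, fun t ht => ?_, fun t ht hLt => ?_, Gamma_mulVec_apply g τhat⟩
  · beta_reduce
    rw [pythagoras t ht]
    exact le_add_of_nonneg_right (hinv.posSemidef.dotProduct_mulVec_nonneg _)
  · beta_reduce at hLt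
    rw [pythagoras t ht, add_eq_left] at hLt
    by_contra hne
    exact (hinv.dotProduct_mulVec_pos (sub_ne_zero.2 (Ne.symm hne))).ne' hLt

/-- The loss `L(t) = (τ̂ − t)ᵀ Σ⁻¹ (τ̂ − t)` is uniquely minimized over the
blockwise-constant vectors at the blockwise average `τ̃ = Γ τ̂`. -/
theorem statement_1 {d K : ℕ} (hd : 2 ≤ d) (hK : 1 ≤ K)
    (g : Fin d → Fin K) (hg : Function.Surjective g)
    (Sig : Matrix (PairIdx d) (PairIdx d) ℝ) (hpd : Sig.PosDef) (hSG : inSG g Sig)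
    (τhat : PairIdx d → ℝ)
    (L : (PairIdx d → ℝ) → ℝ)
    (hL : L = fun t => (τhat - t) ⬝ᵥ (Sig⁻¹).mulVec (τhat - t))
    (τtilde : PairIdx d → ℝ) (hτ : τtilde = (Gamma g).mulVec τhat) :
    (∀ r s : PairIdx d, sameBlock g r s → τtilde r = τtilde s) ∧
    (∀ t : PairIdx d → ℝ, (∀ r s : PairIdx d, sameBlock g r s → t r = t s) →
      L τtilde ≤ L t) ∧
    (∀ t : PairIdx d → ℝ, (∀ r s : PairIdx d, sameBlock g r s → t r = t s) →
      L t = L τtilde → t = τtilde) ∧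
    (∀ r : PairIdx d,
      τtilde r = (∑ s ∈ Finset.univ.filter (fun t => sameBlock g r t), τhat s)
        / (blockCard g r : ℝ)) :=
  statement_1_general g Sig hpd hSG τhat L hL τtilde hτ
end

section
/- Every cluster of 𝒢* is contained in some cluster of 𝒢 (i.e., 𝒢* refines 𝒢, allowing 𝒢* = 𝒢) if and only if 𝒯_𝒢 ⊆ 𝒯_{𝒢*}. -/
/-! Refinement gives the inclusion at once: every `𝒢`-block is a union of `𝒢*`-blocks.
Conversely, if `g i ≠ g j` but `g' i = g' j`, pick a third index `k`; the matrix
`R a b = g a + g b` lies in `𝒯_𝒢`, but `R i k ≠ R j k` although `(i, k)` and `(j, k)` lie in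
the same `𝒢*`-block, so `R ∉ 𝒯_{𝒢*}`. -/

open Matrix

/-- The set `𝒯_𝒢` of symmetric `d×d` matrices that are constant on the blocks of pairs
induced by the cluster map `g`: `R i j = R i' j'` whenever `i < j`, `i' < j'` and the
unordered pairs of cluster labels `{g i, g j}` and `{g i', g j'}` coincide. -/
def TG {d K : ℕ} (g : Fin d → Fin K) : Set (Matrix (Fin d) (Fin d) ℝ) :=
  {R | R.IsSymm ∧ ∀ i j i' j' : Fin d, i < j → i' < j' →
    ((g i = g i' ∧ g j = g j') ∨ (g i = g j' ∧ g j = g i')) → R i j = R i' j'}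

section

variable {d K K' : ℕ} {g : Fin d → Fin K} {g' : Fin d → Fin K'}

theorem apply_eq_apply_of_mem_TG {R : Matrix (Fin d) (Fin d) ℝ} (hR : R ∈ TG g)
    {a b a' b' : Fin d} (hab : a ≠ b) (hab' : a' ≠ b') (ha : g a = g a') (hb : g b = g b') :
    R a b = R a' b' := by
  obtain ⟨hsymm, hblock⟩ := hR
  rcases hab.lt_or_gt with h | h <;> rcases hab'.lt_or_gt with h' | h'
  · exact hblock a b a' b' h h' (Or.inl ⟨ha, hb⟩)
  · rw [hblock a b b' a' h h' (Or.inr ⟨ha, hb⟩), hsymm.apply]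
  · rw [← hsymm.apply, hblock b a a' b' h h' (Or.inr ⟨hb, ha⟩)]
  · rw [← hsymm.apply, hblock b a b' a' h h' (Or.inl ⟨hb, ha⟩), hsymm.apply]

theorem TG_subset_TG_of_refines (h : ∀ i j, g' i = g' j → g i = g j) : TG g ⊆ TG g' := by
  rintro R ⟨hsymm, hblock⟩
  refine ⟨hsymm, fun i j i' j' hij hij' hcond => hblock i j i' j' hij hij' ?_⟩
  rcases hcond with ⟨hi, hj⟩ | ⟨hi, hj⟩
  · exact Or.inl ⟨h i i' hi, h j j' hj⟩
  · exact Or.inr ⟨h i j' hi, h j i' hj⟩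

theorem of_add_mem_TG (f : Fin K → ℝ) : (of fun a b => f (g a) + f (g b)) ∈ TG g := by
  refine ⟨IsSymm.ext fun a b => add_comm _ _, fun a b a' b' _ _ hcond => ?_⟩
  rcases hcond with ⟨ha, hb⟩ | ⟨ha, hb⟩
  · simp only [of_apply, ha, hb]
  · simp only [of_apply, ha, hb, add_comm]

theorem refines_of_TG_subset_TG (hd : 3 ≤ d) (h : TG g ⊆ TG g') (i j : Fin d)
    (hij : g' i = g' j) : g i = g j := by
  obtain ⟨k, hki, hkj⟩ := Fin.exists_ne_and_ne_of_two_lt i j hd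
  have hR := h (of_add_mem_TG (g := g) fun c => (c : ℝ))
  have hsum : (g i : ℝ) + g k = g j + g k :=
    apply_eq_apply_of_mem_TG hR hki.symm hkj.symm hij rfl
  exact Fin.ext (by exact_mod_cast add_right_cancel hsum)

end

theorem statement_3_general {d K K' : ℕ} (hd : 3 ≤ d)
    (g : Fin d → Fin K)
    (g' : Fin d → Fin K') :
    (∀ i j : Fin d, g' i = g' j → g i = g j) ↔ TG g ⊆ TG g' :=
  ⟨TG_subset_TG_of_refines, refines_of_TG_subset_TG hd⟩

/-- `𝒢*` refines `𝒢` (every cluster of `𝒢*` is contained in some cluster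
of `𝒢`) if and only if `𝒯_𝒢 ⊆ 𝒯_{𝒢*}`.  Here the partition `𝒢` is given by the
surjective cluster map `g : Fin d → Fin K` and `𝒢*` by `g' : Fin d → Fin K'`. -/
theorem statement_3 {d K K' : ℕ} (hd : 3 ≤ d) (hK : 1 ≤ K) (hK' : 1 ≤ K')
    (g : Fin d → Fin K) (hg : Function.Surjective g)
    (g' : Fin d → Fin K') (hg' : Function.Surjective g') :
    (∀ i j : Fin d, g' i = g' j → g i = g j) ↔ TG g ⊆ TG g' :=
  statement_3_general hd g g'
end

section
/- There is a unique partition of {1,…,d} of minimal cardinality satisfying the PEA for μ: if partitions 𝒢 and 𝒢* both satisfy the PEA for μ, and no partition satisfying the PEA for μ has strictly fewer clusters than 𝒢 or strictly fewer clusters than 𝒢*, then 𝒢 = 𝒢*. (The minimum is well defined since the partition of {1,…,d} into singletons always satisfies the PEA for μ.) -/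
open MeasureTheory

private lemma pea_mul {d : ℕ} (μ : Measure (Fin d → ℝ)) (σ π : Equiv.Perm (Fin d))
    (hσ : Measure.map (fun x j => x (σ j)) μ = μ)
    (hπ : Measure.map (fun x j => x (π j)) μ = μ) :
    Measure.map (fun x j => x ((σ * π) j)) μ = μ := by
  have hm : ∀ τ : Equiv.Perm (Fin d), Measurable (fun (x : Fin d → ℝ) j => x (τ j)) :=
    fun τ => measurable_pi_lambda _ (fun j => measurable_pi_apply _)
  have : (fun (x : Fin d → ℝ) j => x ((σ * π) j)) =
      (fun (x : Fin d → ℝ) j => x (π j)) ∘ (fun (x : Fin d → ℝ) j => x (σ j)) := rfl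
  rw [this, ← Measure.map_map (hm π) (hm σ), hσ, hπ]

private lemma pea_swap {d : ℕ} (μ : Measure (Fin d → ℝ)) (e : Setoid (Fin d))
    (i j : Fin d) (h : e.r i j)
    (he : ∀ π : Equiv.Perm (Fin d), (∀ i, e.r (π i) i) →
      Measure.map (fun x j => x (π j)) μ = μ) :
    Measure.map (fun x k => x (Equiv.swap i j k)) μ = μ := by
  apply he
  intro k
  rcases eq_or_ne k i with rfl | hki
  · rw [Equiv.swap_apply_left]; exact e.symm h
  rcases eq_or_ne k j with rfl | hkj
  · rw [Equiv.swap_apply_right]; exact h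
  · rw [Equiv.swap_apply_of_ne_of_ne hki hkj]

private lemma pea_sup_swap {d : ℕ} (μ : Measure (Fin d → ℝ)) (c c' : Setoid (Fin d))
    (hc : ∀ π : Equiv.Perm (Fin d), (∀ i, c.r (π i) i) →
      Measure.map (fun x j => x (π j)) μ = μ)
    (hc' : ∀ π : Equiv.Perm (Fin d), (∀ i, c'.r (π i) i) →
      Measure.map (fun x j => x (π j)) μ = μ)
    (i j : Fin d) (h : (c ⊔ c').r i j) :
    Measure.map (fun x k => x (Equiv.swap i j k)) μ = μ := by
  rw [Setoid.sup_eq_eqvGen] at h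
  have h' : Relation.EqvGen (fun x y => c.r x y ∨ c'.r x y) i j := h
  clear h
  induction h' with
  | rel a b hab =>
    rcases hab with hab | hab
    · exact pea_swap μ c a b hab hc
    · exact pea_swap μ c' a b hab hc'
  | refl a =>
    simp only [Equiv.swap_self, Equiv.refl_apply]
    exact Measure.map_id
  | symm a b _ ih => rw [Equiv.swap_comm]; exact ih
  | trans a b k _ _ ihab ihbk =>
    rcases eq_or_ne a b with rfl | hab
    · exact ihbk
    rcases eq_or_ne a k with rfl | hak
    · simp only [Equiv.swap_self, Equiv.refl_apply]
      exact Measure.map_id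
    have : Equiv.swap a k = Equiv.swap b k * Equiv.swap a b * Equiv.swap b k := by
      rw [Equiv.swap_mul_swap_mul_swap hab hak, Equiv.swap_comm]
    rw [this]
    exact pea_mul μ _ _ (pea_mul μ _ _ ihbk ihab) ihbk

private lemma pea_sup {d : ℕ} (μ : Measure (Fin d → ℝ)) (c c' : Setoid (Fin d))
    (hc : ∀ π : Equiv.Perm (Fin d), (∀ i, c.r (π i) i) →
      Measure.map (fun x j => x (π j)) μ = μ)
    (hc' : ∀ π : Equiv.Perm (Fin d), (∀ i, c'.r (π i) i) →
      Measure.map (fun x j => x (π j)) μ = μ) :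
    ∀ π : Equiv.Perm (Fin d), (∀ i, (c ⊔ c').r (π i) i) →
      Measure.map (fun x j => x (π j)) μ = μ := by
  have key : ∀ n (π : Equiv.Perm (Fin d)), π.support.card = n →
      (∀ i, (c ⊔ c').r (π i) i) → Measure.map (fun x j => x (π j)) μ = μ := by
    intro n
    induction n using Nat.strong_induction_on with
    | _ n ih =>
      intro π hn hπ
      rcases eq_or_ne π 1 with rfl | hne
      · simp only [Equiv.Perm.one_apply]; exact (Measure.map_id : Measure.map id μ = μ)
      · obtain ⟨x, hx⟩ : ∃ x, π x ≠ x := by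
          by_contra h
          push_neg at h
          exact hne (Equiv.ext h)
        set τ := Equiv.swap x (π x) with hτ
        have hcard : (τ * π).support.card < n := hn ▸ Equiv.Perm.card_support_swap_mul hx
        have hτπ : ∀ i, (c ⊔ c').r ((τ * π) i) i := by
          intro i
          have h1 : (c ⊔ c').r (π i) i := hπ i
          have h2 : (c ⊔ c').r (τ (π i)) (π i) := by
            rcases eq_or_ne (π i) x with hpi | hpi
            · rw [hpi, Equiv.swap_apply_left]
              exact hπ x
            rcases eq_or_ne (π i) (π x) with hpi2 | hpi2
            · rw [hpi2, Equiv.swap_apply_right]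
              exact (c ⊔ c').symm (hπ x)
            · rw [Equiv.swap_apply_of_ne_of_ne hpi hpi2]
          exact (c ⊔ c').trans h2 h1
        have hτπ_pea := ih _ hcard (τ * π) rfl hτπ
        have hτ_pea : Measure.map (fun y k => y (τ k)) μ = μ :=
          pea_sup_swap μ c c' hc hc' x (π x) ((c ⊔ c').symm (hπ x))
        have hdec : π = τ * (τ * π) := by
          rw [← mul_assoc, hτ, Equiv.swap_mul_self, one_mul]
        rw [hdec]
        exact pea_mul μ _ _ hτ_pea hτπ_pea
  exact fun π => key π.support.card π rfl

private lemma eq_sup_of_card_le {d : ℕ} (c e : Setoid (Fin d)) (hle : c ≤ e)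
    (hcard : Nat.card (Quotient c) ≤ Nat.card (Quotient e)) : c = e := by
  classical
  have hle' : ∀ a b, c.r a b → e.r a b := fun a b h => hle h
  let f : Quotient c → Quotient e := Quotient.map' id (fun a b h => hle' a b h)
  have hfsurj : Function.Surjective f := fun q =>
    Quotient.inductionOn' q (fun a => ⟨Quotient.mk'' a, rfl⟩)
  haveI : Fintype (Quotient c) := Fintype.ofFinite _
  haveI : Fintype (Quotient e) := Fintype.ofFinite _
  have hcards : Fintype.card (Quotient c) = Fintype.card (Quotient e) := by
    have h2 : Fintype.card (Quotient e) ≤ Fintype.card (Quotient c) :=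
      Fintype.card_le_of_surjective f hfsurj
    have h1 : Fintype.card (Quotient c) ≤ Fintype.card (Quotient e) := by
      rwa [← Nat.card_eq_fintype_card, ← Nat.card_eq_fintype_card]
    omega
  have hbij : Function.Bijective f :=
    (Fintype.bijective_iff_surjective_and_card f).2 ⟨hfsurj, hcards⟩
  apply le_antisymm hle
  intro a b hab
  have : f (Quotient.mk'' a) = f (Quotient.mk'' b) := by
    show Quotient.map' id _ (Quotient.mk'' a) = Quotient.map' id _ (Quotient.mk'' b)
    rw [Quotient.map'_mk'', Quotient.map'_mk'']
    exact Quotient.sound' hab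
  exact Quotient.exact' (hbij.1 this)

/-- Uniqueness of a coarsest partition satisfying the PEA.  Partitions of
`{1,…,d}` are encoded as setoids (equivalence relations) on `Fin d`; the number of
clusters of a partition is the cardinality of its quotient.  A partition `c` satisfies
the PEA for `μ` if the pushforward of `μ` under any coordinate permutation preserving
each cluster equals `μ`.  If `c` and `c'` both satisfy the PEA and each has minimal
cardinality among PEA partitions, then `c = c'`. -/
theorem statement_4 {d : ℕ} (hd : 2 ≤ d)
    (μ : Measure (Fin d → ℝ)) [IsProbabilityMeasure μ]
    (c c' : Setoid (Fin d))
    (hc : ∀ π : Equiv.Perm (Fin d), (∀ i, c.r (π i) i) →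
      Measure.map (fun x j => x (π j)) μ = μ)
    (hc' : ∀ π : Equiv.Perm (Fin d), (∀ i, c'.r (π i) i) →
      Measure.map (fun x j => x (π j)) μ = μ)
    (hmin : ∀ c'' : Setoid (Fin d),
      (∀ π : Equiv.Perm (Fin d), (∀ i, c''.r (π i) i) →
        Measure.map (fun x j => x (π j)) μ = μ) →
      Nat.card (Quotient c) ≤ Nat.card (Quotient c''))
    (hmin' : ∀ c'' : Setoid (Fin d),
      (∀ π : Equiv.Perm (Fin d), (∀ i, c''.r (π i) i) →
        Measure.map (fun x j => x (π j)) μ = μ) →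
      Nat.card (Quotient c') ≤ Nat.card (Quotient c'')) :
    c = c' := by
  have hsup := pea_sup μ c c' hc hc'
  have h1 : c = c ⊔ c' := eq_sup_of_card_le c (c ⊔ c') le_sup_left (hmin _ hsup)
  have h2 : c' = c ⊔ c' := eq_sup_of_card_le c' (c ⊔ c') le_sup_right (hmin' _ hsup)
  exact h1.trans h2.symm
end

section
/- Suppose the subgroup H contains every permutation preserving 𝒢 and every permutation preserving 𝒢′. Suppose 𝒢_a and 𝒢_b are distinct clusters of 𝒢 and 𝒢′_c is a cluster of 𝒢′ such that 𝒢_a ∩ 𝒢′_c ≠ ∅ and 𝒢_b ∩ 𝒢′_c ≠ ∅. Then for every i ∈ 𝒢_a and every j ∈ 𝒢_b, the transposition exchanging i and j belongs to H. -/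
lemma swap_mem_aux {d K : ℕ} (g : Fin d → Fin K)
    (H : Subgroup (Equiv.Perm (Fin d)))
    (hHg : ∀ π : Equiv.Perm (Fin d), (∀ i, g (π i) = g i) → π ∈ H)
    (i j : Fin d) (hij : g i = g j) : Equiv.swap i j ∈ H := by
  apply hHg
  intro k
  rcases eq_or_ne k i with rfl | hki
  · simp [Equiv.swap_apply_left, hij]
  rcases eq_or_ne k j with rfl | hkj
  · simp [Equiv.swap_apply_right, hij]
  · rw [Equiv.swap_apply_of_ne_of_ne hki hkj]

/-- Let `H` be a subgroup of the permutations of `{1,…,d}` containing every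
permutation preserving the partition `𝒢` (cluster map `g`) and every permutation
preserving the partition `𝒢′` (cluster map `g'`).  If `𝒢_a` and `𝒢_b` are distinct
clusters of `𝒢` both meeting a cluster `𝒢′_c` of `𝒢′`, then for every `i ∈ 𝒢_a` and
`j ∈ 𝒢_b` the transposition exchanging `i` and `j` belongs to `H`. -/
theorem statement_5 {d K K' : ℕ} (hd : 2 ≤ d) (hK : 1 ≤ K) (hK' : 1 ≤ K')
    (g : Fin d → Fin K) (hg : Function.Surjective g)
    (g' : Fin d → Fin K') (hg' : Function.Surjective g')
    (H : Subgroup (Equiv.Perm (Fin d)))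
    (hHg : ∀ π : Equiv.Perm (Fin d), (∀ i, g (π i) = g i) → π ∈ H)
    (hHg' : ∀ π : Equiv.Perm (Fin d), (∀ i, g' (π i) = g' i) → π ∈ H)
    (a b : Fin K) (hab : a ≠ b) (c : Fin K')
    (hac : ∃ x : Fin d, g x = a ∧ g' x = c) (hbc : ∃ y : Fin d, g y = b ∧ g' y = c) :
    ∀ i j : Fin d, g i = a → g j = b → Equiv.swap i j ∈ H := by
  obtain ⟨x, hxa, hxc⟩ := hac
  obtain ⟨y, hyb, hyc⟩ := hbc
  intro i j hia hjb
  -- σ = swap i x * swap j y maps x to i and y to j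
  set σ : Equiv.Perm (Fin d) := Equiv.swap i x * Equiv.swap j y with hσ
  have hix : Equiv.swap i x ∈ H := swap_mem_aux g H hHg i x (by rw [hia, hxa])
  have hjy : Equiv.swap j y ∈ H := swap_mem_aux g H hHg j y (by rw [hjb, hyb])
  have hxy : Equiv.swap x y ∈ H := swap_mem_aux g' H hHg' x y (by rw [hxc, hyc])
  have hσH : σ ∈ H := H.mul_mem hix hjy
  have hxj : x ≠ j := fun h => hab (by rw [← hxa, h, hjb])
  have hxy' : x ≠ y := fun h => hab (by rw [← hxa, h, hyb])
  have hyi : y ≠ i := fun h => hab (by rw [← hia, ← h, hyb])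
  have hσx : σ x = i := by
    simp only [hσ, Equiv.Perm.mul_apply]
    rw [Equiv.swap_apply_of_ne_of_ne hxj hxy', Equiv.swap_apply_right]
  have hσy : σ y = j := by
    simp only [hσ, Equiv.Perm.mul_apply]
    rw [Equiv.swap_apply_right, Equiv.swap_apply_of_ne_of_ne (fun h => hab (by rw [← hia, ← h, hjb])) hxj.symm]
  have key : Equiv.swap i j = σ * Equiv.swap x y * σ⁻¹ := by
    rw [← hσx, ← hσy, Equiv.swap_apply_apply]
  rw [key]
  exact H.mul_mem (H.mul_mem hσH hxy) (H.inv_mem hσH)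
end

section
/- Let r, s ∈ P lie in the same block. Then for every block ℬ_λ and every overlap type κ, the sets {t ∈ ℬ_λ : φ̄(r,t) = κ} and {t ∈ ℬ_λ : φ̄(s,t) = κ} have the same cardinality. -/
open Matrix Finset

/-!
A permutation `σ` of the indices that preserves every cluster acts on pairs; this action
maps each block to itself and preserves overlap types, `φ̄(σr, σt) = φ̄(r, t)`. If `r` and `s`
lie in the same block, such a `σ` with `σr = s` is a product of two swaps inside clusters, and
`t ↦ σt` is then a bijection between the two sets.
-/

open Equiv

section ClusterPreserving

variable {α β : Type*} [DecidableEq α] {g : α → β}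

theorem comp_swap_eq_self {x y : α} (h : g x = g y) : g ∘ swap x y = g := by
  rw [comp_swap_eq_update, h, Function.update_eq_self, ← h, Function.update_eq_self]

theorem exists_perm_comp_eq_self_of_apply_eq {a b a' b' : α} (hab : a ≠ b) (hab' : a' ≠ b')
    (ha : g a = g a') (hb : g b = g b') :
    ∃ σ : Perm α, g ∘ σ = g ∧ σ a = a' ∧ σ b = b' := by
  set τ := swap a a'
  have hτ : g ∘ τ = g := comp_swap_eq_self ha
  have hτb : g (τ b) = g b' := (congrFun hτ b).trans hb
  refine ⟨τ.trans (swap (τ b) b'), ?_, ?_, swap_apply_left _ _⟩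
  · rw [coe_trans, ← Function.comp_assoc, comp_swap_eq_self hτb, hτ]
  · have hτb_ne : τ b ≠ a' := fun h => hab (τ.injective (h.trans (swap_apply_left a a').symm)).symm
    rw [trans_apply, swap_apply_left, swap_apply_of_ne_of_ne hτb_ne.symm hab']

end ClusterPreserving

namespace PairIdx

variable {d : ℕ}

def toFinset_s8 (t : PairIdx d) : Finset (Fin d) := {t.1.1, t.1.2}

theorem toFinset_injective_s8 : Function.Injective (toFinset_s8 (d := d)) := by
  rintro ⟨⟨a, b⟩, hab⟩ ⟨⟨c, e⟩, hce⟩ h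
  have h' : ({a, b} : Set (Fin d)) = {c, e} := by
    simpa [toFinset_s8] using congrArg (fun u : Finset (Fin d) => (u : Set (Fin d))) h
  rcases Set.pair_eq_pair_iff.1 h' with ⟨rfl, rfl⟩ | ⟨rfl, rfl⟩
  · rfl
  · exact absurd (hab.trans hce) (lt_irrefl _)

def image (σ : Perm (Fin d)) (t : PairIdx d) : PairIdx d :=
  ⟨(min (σ t.1.1) (σ t.1.2), max (σ t.1.1) (σ t.1.2)), min_lt_max.2 (σ.injective.ne t.2.ne)⟩

theorem toFinset_image (σ : Perm (Fin d)) (t : PairIdx d) :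
    (image σ t).toFinset_s8 = t.toFinset_s8.map σ.toEmbedding := by
  rcases le_total (σ t.1.1) (σ t.1.2) with h | h <;>
    simp [toFinset_s8, image, h, Finset.pair_comm]

theorem image_inv_image (σ : Perm (Fin d)) (t : PairIdx d) : image σ⁻¹ (image σ t) = t :=
  toFinset_injective_s8 <| by
    rw [toFinset_image, toFinset_image, Finset.map_map]
    ext x
    simp

def perm (σ : Perm (Fin d)) : Perm (PairIdx d) where
  toFun := image σ
  invFun := image σ⁻¹
  left_inv := image_inv_image σ
  right_inv t := by simpa using image_inv_image σ⁻¹ t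

variable {K : ℕ} {g : Fin d → Fin K} {σ : Perm (Fin d)}

theorem sameBlock_perm_right (hσ : g ∘ σ = g) (t₀ t : PairIdx d) :
    sameBlock g t₀ (perm σ t) ↔ sameBlock g t₀ t := by
  have hσ' : ∀ x, g (σ x) = g x := congrFun hσ
  rcases le_total (σ t.1.1) (σ t.1.2) with h | h
  · simp only [sameBlock, perm, image, coe_fn_mk, min_eq_left h, max_eq_right h, hσ']
  · simp only [sameBlock, perm, image, coe_fn_mk, min_eq_right h, max_eq_left h, hσ']
    tauto

theorem overlap_perm (hσ : g ∘ σ = g) (r t : PairIdx d) :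
    overlap g (perm σ r) (perm σ t) = overlap g r t := by
  change ((perm σ r).toFinset_s8 ∩ (perm σ t).toFinset_s8).val.map g =
    (r.toFinset_s8 ∩ t.toFinset_s8).val.map g
  rw [perm, coe_fn_mk, toFinset_image, toFinset_image, ← Finset.map_inter, Finset.map_val,
    Multiset.map_map, Equiv.coe_toEmbedding, hσ]

theorem exists_perm_eq_of_sameBlock {r s : PairIdx d} (h : sameBlock g r s) :
    ∃ σ : Perm (Fin d), g ∘ σ = g ∧ perm σ r = s := by
  rcases h with ⟨h₁, h₂⟩ | ⟨h₁, h₂⟩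
  · obtain ⟨σ, hσ, h₁, h₂⟩ := exists_perm_comp_eq_self_of_apply_eq r.2.ne s.2.ne h₁ h₂
    exact ⟨σ, hσ, toFinset_injective_s8 <| (toFinset_image σ r).trans <| by simp [toFinset_s8, h₁, h₂]⟩
  · obtain ⟨σ, hσ, h₁, h₂⟩ := exists_perm_comp_eq_self_of_apply_eq r.2.ne s.2.ne.symm h₁ h₂
    exact ⟨σ, hσ, toFinset_injective_s8 <| (toFinset_image σ r).trans <| by
      simp [toFinset_s8, h₁, h₂, Finset.pair_comm]⟩

end PairIdx

theorem statement_8_general {d K : ℕ}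
    (g : Fin d → Fin K)
    (r s : PairIdx d) (hrs : sameBlock g r s)
    (t₀ : PairIdx d) (κ : Multiset (Fin K)) :
    (Finset.univ.filter (fun t => sameBlock g t₀ t ∧ overlap g r t = κ)).card
      = (Finset.univ.filter (fun t => sameBlock g t₀ t ∧ overlap g s t = κ)).card := by
  obtain ⟨σ, hσ, rfl⟩ := PairIdx.exists_perm_eq_of_sameBlock hrs
  exact Finset.card_equiv (PairIdx.perm σ) fun t => by
    simp only [Finset.mem_filter, Finset.mem_univ, true_and,
      PairIdx.sameBlock_perm_right hσ, PairIdx.overlap_perm hσ]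

/-- If `r` and `s` lie in the same block, then for every block (represented
by any of its elements `t₀`) and every overlap type `κ`, the sets
`{t ∈ ℬ_λ : φ̄(r,t) = κ}` and `{t ∈ ℬ_λ : φ̄(s,t) = κ}` have the same cardinality. -/
theorem statement_8 {d K : ℕ} (hd : 2 ≤ d) (hK : 1 ≤ K)
    (g : Fin d → Fin K) (hg : Function.Surjective g)
    (r s : PairIdx d) (hrs : sameBlock g r s)
    (t₀ : PairIdx d) (κ : Multiset (Fin K)) :
    (Finset.univ.filter (fun t => sameBlock g t₀ t ∧ overlap g r t = κ)).card
      = (Finset.univ.filter (fun t => sameBlock g t₀ t ∧ overlap g s t = κ)).card :=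
  statement_8_general g r s hrs t₀ κ
end

section
/- Let r ∈ ℬ_{ℓ₁} and s ∈ ℬ_{ℓ₂} be pairs, and let κ be any overlap type. Then |{t ∈ ℬ_{ℓ₂} : φ̄(r,t) = κ}| · |ℬ_{ℓ₁}| = |{t ∈ ℬ_{ℓ₁} : φ̄(s,t) = κ}| · |ℬ_{ℓ₂}|. -/
open Matrix Finset

section Aux

variable {d K : ℕ} (g : Fin d → Fin K)

/-- auxiliary: the underlying 2-element finset of a pair index. -/
def pairFinset (t : PairIdx d) : Finset (Fin d) := {t.1.1, t.1.2}

lemma overlap_def (r t : PairIdx d) :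
    overlap g r t = ((pairFinset r ∩ pairFinset t).val.map g) := rfl

lemma overlap_comm (r t : PairIdx d) : overlap g r t = overlap g t r := by
  rw [overlap_def, overlap_def, Finset.inter_comm]

lemma pairFinset_injective : Function.Injective (pairFinset (d := d)) := by
  rintro ⟨⟨a, b⟩, hab⟩ ⟨⟨c, e⟩, hce⟩ h
  simp only [pairFinset] at h
  have ha : a ∈ ({c, e} : Finset (Fin d)) := h ▸ (by simp)
  have hb : b ∈ ({c, e} : Finset (Fin d)) := h ▸ (by simp)
  simp only [Finset.mem_insert, Finset.mem_singleton] at ha hb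
  simp only at hab hce
  apply Subtype.ext
  rcases ha with h1 | h1 <;> rcases hb with h2 | h2
  · rw [h1, h2] at hab; exact absurd hab (lt_irrefl _)
  · exact Prod.ext h1 h2
  · rw [h1] at hab; rw [h2] at hab
    exact absurd (hab.trans hce) (lt_irrefl _)
  · rw [h1, h2] at hab; exact absurd hab (lt_irrefl _)

lemma sameBlock_symm {r t : PairIdx d} (h : sameBlock g r t) : sameBlock g t r := by
  rcases h with ⟨h1, h2⟩ | ⟨h1, h2⟩
  · exact Or.inl ⟨h1.symm, h2.symm⟩
  · exact Or.inr ⟨h2.symm, h1.symm⟩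

lemma sameBlock_trans {r t u : PairIdx d} (h : sameBlock g r t) (h' : sameBlock g t u) :
    sameBlock g r u := by
  rcases h with ⟨h1, h2⟩ | ⟨h1, h2⟩ <;> rcases h' with ⟨h3, h4⟩ | ⟨h3, h4⟩
  · exact Or.inl ⟨h1.trans h3, h2.trans h4⟩
  · exact Or.inr ⟨h1.trans h3, h2.trans h4⟩
  · exact Or.inr ⟨h1.trans h4, h2.trans h3⟩
  · exact Or.inl ⟨h1.trans h4, h2.trans h3⟩

/-- apply a permutation to a pair index, reordering so it stays sorted. -/
def permPair (σ : Equiv.Perm (Fin d)) (t : PairIdx d) : PairIdx d :=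
  if h : σ t.1.1 < σ t.1.2 then ⟨(σ t.1.1, σ t.1.2), h⟩
  else ⟨(σ t.1.2, σ t.1.1),
    lt_of_le_of_ne (not_lt.mp h) (fun he => (ne_of_lt t.2) (σ.injective he).symm)⟩

lemma pairFinset_permPair (σ : Equiv.Perm (Fin d)) (t : PairIdx d) :
    pairFinset (permPair σ t) = (pairFinset t).image σ := by
  unfold permPair
  split <;> simp [pairFinset, Finset.image_insert, Finset.pair_comm]

lemma sameBlock_permPair {σ : Equiv.Perm (Fin d)} (hσ : ∀ i, g (σ i) = g i)
    (s t : PairIdx d) : sameBlock g s (permPair σ t) ↔ sameBlock g s t := by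
  unfold permPair
  split <;> simp only [sameBlock, hσ] <;> tauto

lemma overlap_permPair {σ : Equiv.Perm (Fin d)} (hσ : ∀ i, g (σ i) = g i)
    {r r' : PairIdx d} (hr : pairFinset r' = (pairFinset r).image σ) (t : PairIdx d) :
    overlap g r' (permPair σ t) = overlap g r t := by
  rw [overlap_def, overlap_def, hr, pairFinset_permPair,
    ← Finset.image_inter _ _ σ.injective]
  have hv : (Finset.image (⇑σ) (pairFinset r ∩ pairFinset t)).val
      = Multiset.map (⇑σ) (pairFinset r ∩ pairFinset t).val := by
    rw [Finset.image_val, Multiset.dedup_eq_self.mpr]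
    exact ((pairFinset r ∩ pairFinset t).nodup).map σ.injective
  rw [hv, Multiset.map_map]
  simp only [Function.comp]
  exact congrArg (fun f => Multiset.map f _) (funext hσ)

lemma swap_aux (a b c e : Fin d) (hab : a ≠ b) (hce : c ≠ e)
    (h1 : g a = g c) (h2 : g b = g e) :
    ∃ σ : Equiv.Perm (Fin d), (∀ i, g (σ i) = g i) ∧ σ a = c ∧ σ b = e := by
  set b' := Equiv.swap a c b with hb'
  have hkey : ∀ x y i : Fin d, g x = g y → g (Equiv.swap x y i) = g i := by
    intro x y i h
    by_cases hx : i = x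
    · rw [hx, Equiv.swap_apply_left]; exact h.symm
    by_cases hy : i = y
    · rw [hy, Equiv.swap_apply_right]; exact h
    · rw [Equiv.swap_apply_of_ne_of_ne hx hy]
  have hb'c : b' ≠ c := by
    intro h
    exact hab (((Equiv.swap a c).injective
      ((hb'.symm.trans h).trans (Equiv.swap_apply_left a c).symm)).symm)
  refine ⟨Equiv.swap b' e * Equiv.swap a c, ?_, ?_, ?_⟩
  · intro i
    rw [Equiv.Perm.mul_apply, hkey _ _ _ (by rw [hb', hkey _ _ _ h1]; exact h2),
      hkey _ _ _ h1]
  · rw [Equiv.Perm.mul_apply, Equiv.swap_apply_left,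
      Equiv.swap_apply_of_ne_of_ne hb'c.symm hce]
  · rw [Equiv.Perm.mul_apply, ← hb', Equiv.swap_apply_left]

lemma exists_perm {r r' : PairIdx d} (h : sameBlock g r r') :
    ∃ σ : Equiv.Perm (Fin d), (∀ i, g (σ i) = g i) ∧
      pairFinset r' = (pairFinset r).image σ := by
  rcases h with ⟨h1, h2⟩ | ⟨h1, h2⟩
  · obtain ⟨σ, hσ, ha, hb⟩ := swap_aux g r.1.1 r.1.2 r'.1.1 r'.1.2
      (ne_of_lt r.2) (ne_of_lt r'.2) h1 h2
    exact ⟨σ, hσ, by simp [pairFinset, Finset.image_insert, ha, hb]⟩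
  · obtain ⟨σ, hσ, ha, hb⟩ := swap_aux g r.1.1 r.1.2 r'.1.2 r'.1.1
      (ne_of_lt r.2) (ne_of_lt r'.2).symm h1 h2
    exact ⟨σ, hσ, by
      simp [pairFinset, Finset.image_insert, ha, hb, Finset.pair_comm]⟩

lemma count_invariant {r r' : PairIdx d} (h : sameBlock g r r') (s : PairIdx d)
    (κ : Multiset (Fin K)) :
    (Finset.univ.filter (fun t => sameBlock g s t ∧ overlap g r t = κ)).card
      = (Finset.univ.filter (fun t => sameBlock g s t ∧ overlap g r' t = κ)).card := by
  classical
  obtain ⟨σ, hσ, hpf⟩ := exists_perm g h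
  have hpf' : pairFinset r = (pairFinset r').image σ.symm := by
    rw [hpf, Finset.image_image]
    simp
  have hσ' : ∀ i, g (σ.symm i) = g i := fun i => by
    conv_rhs => rw [← Equiv.apply_symm_apply σ i, hσ]
  have hinv : ∀ t : PairIdx d, permPair σ.symm (permPair σ t) = t := by
    intro t
    apply pairFinset_injective
    rw [pairFinset_permPair, pairFinset_permPair, Finset.image_image]
    simp
  have hinv' : ∀ t : PairIdx d, permPair σ (permPair σ.symm t) = t := by
    intro t
    apply pairFinset_injective
    rw [pairFinset_permPair, pairFinset_permPair, Finset.image_image]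
    simp
  apply Finset.card_bij' (fun t _ => permPair σ t) (fun t _ => permPair σ.symm t)
  · intro t ht
    simp only [Finset.mem_filter, Finset.mem_univ, true_and] at ht ⊢
    exact ⟨(sameBlock_permPair g hσ s t).mpr ht.1,
      (overlap_permPair g hσ hpf t).trans ht.2⟩
  · intro t ht
    simp only [Finset.mem_filter, Finset.mem_univ, true_and] at ht ⊢
    exact ⟨(sameBlock_permPair g hσ' s t).mpr ht.1,
      (overlap_permPair g hσ' hpf' t).trans ht.2⟩
  · exact fun t _ => hinv t
  · exact fun t _ => hinv' t

end Aux

/-- For pairs `r ∈ ℬ_{ℓ₁}`, `s ∈ ℬ_{ℓ₂}` (the blocks being represented by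
`r` and `s` themselves) and any overlap type `κ`,
`|{t ∈ ℬ_{ℓ₂} : φ̄(r,t) = κ}| ⬝ |ℬ_{ℓ₁}| = |{t ∈ ℬ_{ℓ₁} : φ̄(s,t) = κ}| ⬝ |ℬ_{ℓ₂}|`. -/
theorem statement_9 {d K : ℕ} (hd : 2 ≤ d) (hK : 1 ≤ K)
    (g : Fin d → Fin K) (hg : Function.Surjective g)
    (r s : PairIdx d) (κ : Multiset (Fin K)) :
    (Finset.univ.filter (fun t => sameBlock g s t ∧ overlap g r t = κ)).card
        * blockCard g r
      = (Finset.univ.filter (fun t => sameBlock g r t ∧ overlap g s t = κ)).card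
        * blockCard g s := by
  classical
  set A := Finset.univ.filter (fun u => sameBlock g r u) with hA
  set B := Finset.univ.filter (fun t => sameBlock g s t) with hB
  have key : ∀ (x : PairIdx d) (C : Finset (PairIdx d)),
      (∑ t ∈ C, if overlap g x t = κ then 1 else 0)
        = (C.filter (fun t => overlap g x t = κ)).card := by
    intro x C; rw [Finset.card_filter]
  have hfA : ∀ x : PairIdx d,
      Finset.univ.filter (fun t => sameBlock g r t ∧ overlap g x t = κ)
        = A.filter (fun t => overlap g x t = κ) := by
    intro x; rw [hA, Finset.filter_filter]
  have hfB : ∀ x : PairIdx d,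
      Finset.univ.filter (fun t => sameBlock g s t ∧ overlap g x t = κ)
        = B.filter (fun t => overlap g x t = κ) := by
    intro x; rw [hB, Finset.filter_filter]
  have step1 : (Finset.univ.filter (fun t => sameBlock g s t ∧ overlap g r t = κ)).card
      * blockCard g r
      = ∑ u ∈ A, ∑ t ∈ B, if overlap g u t = κ then 1 else 0 := by
    have : ∀ u ∈ A, (∑ t ∈ B, if overlap g u t = κ then 1 else 0)
        = (Finset.univ.filter (fun t => sameBlock g s t ∧ overlap g r t = κ)).card := by
      intro u hu
      have hru : sameBlock g r u := (Finset.mem_filter.mp hu).2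
      rw [key, ← hfB, ← count_invariant g hru s κ]
    rw [Finset.sum_congr rfl this, Finset.sum_const, smul_eq_mul, mul_comm]
    rfl
  have step2 : (Finset.univ.filter (fun t => sameBlock g r t ∧ overlap g s t = κ)).card
      * blockCard g s
      = ∑ t ∈ B, ∑ u ∈ A, if overlap g u t = κ then 1 else 0 := by
    have : ∀ t ∈ B, (∑ u ∈ A, if overlap g u t = κ then 1 else 0)
        = (Finset.univ.filter (fun u => sameBlock g r u ∧ overlap g s u = κ)).card := by
      intro t ht
      have hst : sameBlock g s t := (Finset.mem_filter.mp ht).2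
      have : (∑ u ∈ A, if overlap g u t = κ then 1 else 0)
          = ∑ u ∈ A, if overlap g t u = κ then 1 else 0 := by
        apply Finset.sum_congr rfl
        intro u _
        rw [overlap_comm]
      rw [this, key, ← hfA, ← count_invariant g hst r κ]
    rw [Finset.sum_congr rfl this, Finset.sum_const, smul_eq_mul, mul_comm]
    rfl
  rw [step1, step2, Finset.sum_comm]
end

section
/- If R and Q are 𝒢-constant real d×d matrices, then the product R Q is 𝒢-constant. -/
open Matrix

/-- A `d×d` matrix is `𝒢`-constant (for the partition given by the cluster map `g`) if
`M_{i₁j₁} = M_{i₂j₂}` whenever `g i₁ = g i₂`, `g j₁ = g j₂`, and `i₁ = j₁ ↔ i₂ = j₂`. -/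
def GConst {d K : ℕ} (g : Fin d → Fin K) (M : Matrix (Fin d) (Fin d) ℝ) : Prop :=
  ∀ i₁ j₁ i₂ j₂ : Fin d, g i₁ = g i₂ → g j₁ = g j₂ → (i₁ = j₁ ↔ i₂ = j₂) →
    M i₁ j₁ = M i₂ j₂

lemma gswap {d K : ℕ} (g : Fin d → Fin K) {a b : Fin d} (hab : g a = g b) (l : Fin d) :
    g (Equiv.swap a b l) = g l := by
  rcases eq_or_ne l a with rfl | ha
  · rw [Equiv.swap_apply_left]; exact hab.symm
  rcases eq_or_ne l b with rfl | hb
  · rw [Equiv.swap_apply_right]; exact hab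
  · rw [Equiv.swap_apply_of_ne_of_ne ha hb]

lemma exists_perm_s16 {d K : ℕ} (g : Fin d → Fin K) {i₁ j₁ i₂ j₂ : Fin d}
    (hi : g i₁ = g i₂) (hj : g j₁ = g j₂) (hij : i₁ = j₁ ↔ i₂ = j₂) :
    ∃ σ : Equiv.Perm (Fin d), (∀ l, g (σ l) = g l) ∧ σ i₁ = i₂ ∧ σ j₁ = j₂ := by
  by_cases h : i₁ = j₁
  · have h2 : i₂ = j₂ := hij.mp h
    subst h; subst h2
    exact ⟨Equiv.swap i₁ i₂, gswap g hi, Equiv.swap_apply_left _ _,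
      Equiv.swap_apply_left _ _⟩
  · have h2 : i₂ ≠ j₂ := fun e => h (hij.mpr e)
    set j₁' := Equiv.swap i₁ i₂ j₁ with hj₁'
    have hgj₁' : g j₁' = g j₁ := gswap g hi j₁
    refine ⟨(Equiv.swap i₁ i₂).trans (Equiv.swap j₁' j₂), ?_, ?_, ?_⟩
    · intro l
      simp only [Equiv.trans_apply]
      rw [gswap g (by rw [hgj₁', hj]), gswap g hi]
    · simp only [Equiv.trans_apply, Equiv.swap_apply_left]
      have hne1 : i₂ ≠ j₁' := by
        rcases eq_or_ne j₁ i₁ with rfl | ha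
        · exact absurd rfl h
        rcases eq_or_ne j₁ i₂ with rfl | hb
        · rw [hj₁', Equiv.swap_apply_right]
          intro e; exact h e.symm
        · rw [hj₁', Equiv.swap_apply_of_ne_of_ne ha hb]
          exact fun e => hb e.symm
      rw [Equiv.swap_apply_of_ne_of_ne hne1 h2]
    · simp only [Equiv.trans_apply, ← hj₁', Equiv.swap_apply_left]

/-- The product of two `𝒢`-constant matrices is `𝒢`-constant. -/
theorem statement_16 {d K : ℕ} (hd : 2 ≤ d) (hK : 1 ≤ K)
    (g : Fin d → Fin K) (hg : Function.Surjective g)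
    (R Q : Matrix (Fin d) (Fin d) ℝ) (hR : GConst g R) (hQ : GConst g Q) :
    GConst g (R * Q) := by
  intro i₁ j₁ i₂ j₂ hi hj hij
  obtain ⟨σ, hσg, hσi, hσj⟩ := exists_perm_s16 g hi hj hij
  simp only [Matrix.mul_apply]
  rw [← Equiv.sum_comp σ (fun l => R i₂ l * Q l j₂)]
  refine Finset.sum_congr rfl fun l _ => ?_
  congr 1
  · exact hR i₁ l i₂ (σ l) hi (hσg l).symm
      ⟨fun e => by rw [← e, hσi.symm], fun e => σ.injective (by rw [hσi, e])⟩
  · exact hQ l j₁ (σ l) j₂ (hσg l).symm hj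
      ⟨fun e => by rw [e, hσj], fun e => σ.injective (by rw [hσj, ← e])⟩
end
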